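/- arXiv:1805.03405 — 3 statements merged into one kernel-verified Lean document; each statement's English description precedes it below -/
import Mathlib

section
/- Let G be a finite simple cobipartite graph with at least two vertices that is 2P₃-complement-free (i.e., has no induced subgraph isomorphic to the complement of 2P₃), and let (A, B) be a bipartition of the complement Ḡ such that the labeled bigraph (Ḡ, A, B) is right-Sperner. Then there exist a partition A = {z} ∪ A¹ ∪ A² and a partition B = B¹ ∪ B² (all parts pairwise disjoint, A¹, A², B¹, B² possibly empty) such that in G: A is a clique and B is a clique; z is adjacent to every vertex of B¹ and to no vertex of B²; every vertex of A¹ is adjacent to every vertex of B²; no vertex of A² is adjacent to any vertex of B¹; the induced subgraphs G[A¹ ∪ B¹] and G[A² ∪ B²] have no induced subgraph isomorphic to the complement of 2P₃; and the complements of G[A¹ ∪ B¹] and G[A² ∪ B²] are bipartite graphs such that the labeled bigraphs (complement of G[A¹ ∪ B¹], A¹, B¹) and (complement of G[A² ∪ B²], A², B²) are right-Sperner. -/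
open Finset

open scoped Classical

/-- A hypergraph (given by its set of hyperedges, each a finite set of vertices)
is 1-Sperner if every two distinct hyperedges `e` and `f` satisfy
`min |e \ f| |f \ e| = 1`. -/
def OneSperner {V : Type*} [DecidableEq V] (E : Set (Finset V)) : Prop :=
  ∀ e ∈ E, ∀ f ∈ E, e ≠ f → min (e \ f).card (f \ e).card = 1

/-- A set of vertices `X` is dependent in the hypergraph with hyperedge set `E`
if it contains some hyperedge; it is independent otherwise. -/
def HypDep {V : Type*} (E : Set (Finset V)) (X : Finset V) : Prop :=
  ∃ e ∈ E, e ⊆ X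

/-- A hypergraph is threshold if there are nonnegative integer vertex weights and a
threshold such that a vertex set has weight at least the threshold iff it contains
a hyperedge. -/
def HypThreshold {V : Type*} [Fintype V] (E : Set (Finset V)) : Prop :=
  ∃ (w : V → ℕ) (t : ℕ), ∀ X : Finset V, (t ≤ ∑ x ∈ X, w x) ↔ HypDep E X

/-- The characteristic vector of a finite vertex set. -/
def chiVec {V : Type*} [DecidableEq V] (X : Finset V) : V → ℕ :=
  fun v => if v ∈ X then 1 else 0

/-- A hypergraph is 2-asummable if there are no two independent sets `A₁, A₂`
and two dependent sets `B₁, B₂` with `χ^{A₁} + χ^{A₂} = χ^{B₁} + χ^{B₂}`. -/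
def TwoAsummable {V : Type*} [DecidableEq V] (E : Set (Finset V)) : Prop :=
  ¬ ∃ A₁ A₂ B₁ B₂ : Finset V,
      ¬ HypDep E A₁ ∧ ¬ HypDep E A₂ ∧ HypDep E B₁ ∧ HypDep E B₂ ∧
      ∀ v, chiVec A₁ v + chiVec A₂ v = chiVec B₁ v + chiVec B₂ v

/-- A graph is threshold if there are nonnegative integer vertex weights and a threshold
such that a vertex set has weight at most the threshold iff it is an independent set. -/
def ThresholdGraph {V : Type*} [Fintype V] (G : SimpleGraph V) : Prop :=
  ∃ (w : V → ℕ) (t : ℕ), ∀ X : Finset V,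
    ((∑ x ∈ X, w x) ≤ t ↔ ∀ u ∈ X, ∀ v ∈ X, ¬ G.Adj u v)

/-- A vertex cover of a graph: every edge has an endpoint in the set. -/
def IsVertexCover {V : Type*} (G : SimpleGraph V) (S : Finset V) : Prop :=
  ∀ u v : V, G.Adj u v → u ∈ S ∨ v ∈ S

/-- The vertex cover hypergraph: hyperedges are the inclusion-minimal vertex covers. -/
def VCHyp {V : Type*} (G : SimpleGraph V) : Set (Finset V) :=
  {S | IsVertexCover G S ∧ ∀ T : Finset V, IsVertexCover G T → T ⊆ S → T = S}

/-- The clique hypergraph: hyperedges are the inclusion-maximal cliques. -/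
def CliqueHyp {V : Type*} (G : SimpleGraph V) : Set (Finset V) :=
  {S | G.IsClique (S : Set V) ∧ ∀ T : Finset V, G.IsClique (T : Set V) → S ⊆ T → T = S}

/-- The closed neighborhood `N[v]` of a vertex, as a finite set. -/
def closedNbhd {V : Type*} [Fintype V] [DecidableEq V] (G : SimpleGraph V)
    [DecidableRel G.Adj] (v : V) : Finset V :=
  insert v (G.neighborFinset v)

/-- The closed neighborhood hypergraph: hyperedges are the inclusion-minimal sets of
the form `N[v]`. -/
def NHyp {V : Type*} [Fintype V] [DecidableEq V] (G : SimpleGraph V)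
    [DecidableRel G.Adj] : Set (Finset V) :=
  {S | (∃ v : V, S = closedNbhd G v) ∧
       ∀ v : V, closedNbhd G v ⊆ S → closedNbhd G v = S}

/-- A dominating set: every vertex is in the set or has a neighbor in it. -/
def IsDomSet {V : Type*} (G : SimpleGraph V) (D : Finset V) : Prop :=
  ∀ v : V, v ∈ D ∨ ∃ u ∈ D, G.Adj u v

/-- The dominating set hypergraph: hyperedges are the inclusion-minimal dominating sets. -/
def DomHyp {V : Type*} (G : SimpleGraph V) : Set (Finset V) :=
  {D | IsDomSet G D ∧ ∀ T : Finset V, IsDomSet G T → T ⊆ D → T = D}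

/-- A graph is domishold if there are nonnegative integer vertex weights and a threshold
such that a vertex set has weight at least the threshold iff it is a dominating set. -/
def Domishold {V : Type*} [Fintype V] (G : SimpleGraph V) : Prop :=
  ∃ (w : V → ℕ) (t : ℕ), ∀ X : Finset V, (t ≤ ∑ x ∈ X, w x) ↔ IsDomSet G X

/-- `(K, I)` is a split partition of `G`: `K` is a clique, `I` an independent set,
they are disjoint and cover all vertices. -/
def IsSplitPartition {V : Type*} [Fintype V] (G : SimpleGraph V) (K I : Finset V) : Prop :=
  Disjoint K I ∧ K ∪ I = Finset.univ ∧ G.IsClique (K : Set V) ∧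
    ∀ u ∈ I, ∀ v ∈ I, ¬ G.Adj u v

/-- The labeled split graph `(G, K, I)` is clique-Sperner: for `u, v ∈ K`,
`N(u) ∩ I ⊆ N(v) ∩ I` implies `u = v`. -/
def CliqueSperner {V : Type*} (G : SimpleGraph V) (K I : Finset V) : Prop :=
  ∀ u ∈ K, ∀ v ∈ K,
    G.neighborSet u ∩ (I : Set V) ⊆ G.neighborSet v ∩ (I : Set V) → u = v

/-- The labeled split graph `(G, K, I)` is independent-Sperner: for `u, v ∈ I`,
`N(u) ⊆ N(v)` implies `u = v`. -/
def IndependentSperner {V : Type*} (G : SimpleGraph V) (K I : Finset V) : Prop :=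
  ∀ u ∈ I, ∀ v ∈ I, G.neighborSet u ⊆ G.neighborSet v → u = v

/-- `(A, B)` is a bipartition of `G` into two disjoint independent sets covering
all vertices. -/
def IsBipartition {V : Type*} [Fintype V] (G : SimpleGraph V) (A B : Finset V) : Prop :=
  Disjoint A B ∧ A ∪ B = Finset.univ ∧
    (∀ u ∈ A, ∀ v ∈ A, ¬ G.Adj u v) ∧ (∀ u ∈ B, ∀ v ∈ B, ¬ G.Adj u v)

/-- The labeled bigraph `(G, A, B)` is right-Sperner: for `u, v ∈ B`,
`N(u) ⊆ N(v)` implies `u = v`. -/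
def RightSperner {V : Type*} (G : SimpleGraph V) (A B : Finset V) : Prop :=
  ∀ u ∈ B, ∀ v ∈ B, G.neighborSet u ⊆ G.neighborSet v → u = v

/-- The graph `2P₃`: disjoint union of the paths `0-1-2` and `3-4-5`. -/
def twoP3 : SimpleGraph (Fin 6) :=
  SimpleGraph.fromRel (fun u v =>
    (u, v) ∈ ([(0,1),(1,2),(3,4),(4,5)] : List (Fin 6 × Fin 6)))

/-- The graph `H`: obtained from `2P₃` (paths `0-1-2` and `3-4-5`) by adding the
edge `1-4` between the two middle vertices. -/
def graphH : SimpleGraph (Fin 6) :=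
  SimpleGraph.fromRel (fun u v =>
    (u, v) ∈ ([(0,1),(1,2),(3,4),(4,5),(1,4)] : List (Fin 6 × Fin 6)))

/-- The domination number: minimum size of a dominating set. -/
noncomputable def gamma {W : Type*} [Fintype W] (G : SimpleGraph W) : ℕ :=
  sInf {n | ∃ D : Finset W, IsDomSet G D ∧ D.card = n}

/-- The total domination number: minimum size of a total dominating set. -/
noncomputable def gammaT {W : Type*} [Fintype W] (G : SimpleGraph W) : ℕ :=
  sInf {n | ∃ D : Finset W, (∀ v : W, ∃ u ∈ D, G.Adj u v) ∧ D.card = n}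

/-- The connected domination number: minimum size of a connected dominating set. -/
noncomputable def gammaC {W : Type*} [Fintype W] (G : SimpleGraph W) : ℕ :=
  sInf {n | ∃ D : Finset W, IsDomSet G D ∧ (G.induce (D : Set W)).Connected ∧ D.card = n}

/-- The co-occurrence graph of a hypergraph: two distinct vertices are adjacent iff
some hyperedge contains both. -/
def coOccurrenceGraph {W : Type*} (E : Set (Finset W)) : SimpleGraph W where
  Adj u v := u ≠ v ∧ ∃ e ∈ E, u ∈ e ∧ v ∈ e
  symm := by
    constructor
    rintro u v ⟨h, e, he, hu, hv⟩
    exact ⟨h.symm, e, he, hv, hu⟩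
  loopless := by
    constructor
    rintro u ⟨h, -⟩
    exact h rfl

/-- The edge-clique split graph of a hypergraph `(V, E)`: vertex set `E ⊕ V`, the
hyperedges form a clique, the vertices an independent set, and `v ∈ V` is adjacent
to `e ∈ E` iff `v ∈ e`. -/
def edgeCliqueGraph {V : Type*} (E : Finset (Finset V)) :
    SimpleGraph ({e // e ∈ E} ⊕ V) where
  Adj x y :=
    match x, y with
    | Sum.inl e, Sum.inl f => e ≠ f
    | Sum.inl e, Sum.inr v => v ∈ (e : Finset V)
    | Sum.inr v, Sum.inl e => v ∈ (e : Finset V)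
    | Sum.inr _, Sum.inr _ => False
  symm := by
    constructor
    rintro (e | u) (f | v) h
    · exact Ne.symm h
    · exact h
    · exact h
    · exact h.elim
  loopless := by
    constructor
    rintro (e | v) h
    · exact h rfl
    · exact h

/-!
In the complement `Gᶜ`, write `N(b) ⊆ A` for the neighbourhood of `b ∈ B`. Two vertices on
each side of `N(b) Δ N(b')` would give an induced `2P₃` in `Gᶜ`, so together with the
right-Sperner property the neighbourhoods form a 1-Sperner hypergraph. Such a hypergraph has a
vertex `z` through which it splits: every hyperedge containing `z`, once `z` is removed, lies in
every hyperedge avoiding `z`. The decomposition is then read off from `z`: `B` splits according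
to adjacency to `z`, and `A \ {z}` according to whether it meets a neighbourhood containing `z`.
-/

open scoped SimpleGraph

section OneSperner

variable {α : Type*} [DecidableEq α] {E : Finset (Finset α)}

theorem OneSperner.card_sdiff_eq_one (hE : OneSperner (E : Set (Finset α))) {e f : Finset α}
    (he : e ∈ E) (hf : f ∈ E) (hef : e ≠ f) (hle : #e ≤ #f) : #(e \ f) = 1 := by
  simpa [min_eq_left (card_sdiff_le_card_sdiff_iff.mpr hle)] using hE e he f hf hef

theorem OneSperner.eq_of_mem_sdiff (hE : OneSperner (E : Set (Finset α))) {e f : Finset α}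
    (he : e ∈ E) (hf : f ∈ E) (hef : e ≠ f) (hle : #e ≤ #f) {x y : α}
    (hxe : x ∈ e) (hxf : x ∉ f) (hye : y ∈ e) (hyf : y ∉ f) : x = y :=
  card_le_one.mp (hE.card_sdiff_eq_one he hf hef hle).le x (mem_sdiff.mpr ⟨hxe, hxf⟩) y
    (mem_sdiff.mpr ⟨hye, hyf⟩)

theorem OneSperner.exists_mem_sdiff (hE : OneSperner (E : Set (Finset α))) {e f : Finset α}
    (he : e ∈ E) (hf : f ∈ E) (hef : e ≠ f) (hle : #e ≤ #f) : ∃ x ∈ e, x ∉ f := by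
  obtain ⟨x, hx⟩ := card_pos.mp (hE.card_sdiff_eq_one he hf hef hle).ge
  exact ⟨x, (mem_sdiff.mp hx).1, (mem_sdiff.mp hx).2⟩

/-- The splitting vertex `z` is the unique vertex of `e₀ \ e₁`, where `e₀` is a smallest
hyperedge and `e₁` a largest one among the others. -/
theorem OneSperner.exists_splitting_vertex (hE : OneSperner (E : Set (Finset α)))
    (hcard : 1 < #E) :
    ∃ z, (∃ e ∈ E, z ∈ e) ∧ ∀ e ∈ E, ∀ f ∈ E, z ∈ e → z ∉ f → e.erase z ⊆ f := by
  obtain ⟨e₀, he₀, hmin⟩ := E.exists_min_image card (card_pos.mp (by omega))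
  obtain ⟨e₁, he₁', hmax₁⟩ := (E.erase e₀).exists_max_image card
    (card_pos.mp (by rw [card_erase_of_mem he₀]; omega))
  have he₀₁ : e₁ ≠ e₀ := ne_of_mem_erase he₁'
  have he₁ : e₁ ∈ E := mem_of_mem_erase he₁'
  have hmax : ∀ e ∈ E, #e ≤ #e₁ := fun e he => by
    rcases eq_or_ne e e₀ with rfl | h
    exacts [hmin e₁ he₁, hmax₁ e (mem_erase.mpr ⟨h, he⟩)]
  obtain ⟨z, hz₀, hz₁⟩ := hE.exists_mem_sdiff he₀ he₁ he₀₁.symm (hmin e₁ he₁)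
  have below : ∀ e ∈ E, z ∈ e → ∀ x ∈ e, x ∉ e₁ → x = z := fun e he hze x hxe hxe₁ =>
    hE.eq_of_mem_sdiff he he₁ (by rintro rfl; exact hz₁ hze) (hmax e he) hxe hxe₁ hze hz₁
  have above : ∀ f ∈ E, z ∉ f → ∀ x ∈ e₀, x ∉ f → x = z := fun f hf hzf x hx₀ hxf =>
    hE.eq_of_mem_sdiff he₀ hf (by rintro rfl; exact hzf hz₀) (hmin f hf) hx₀ hxf hz₀ hzf
  refine ⟨z, ⟨e₀, he₀, hz₀⟩, fun e he f hf hze hzf w hw => ?_⟩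
  obtain ⟨hwz, hwe⟩ := mem_erase.mp hw
  by_contra hwf
  have hef : e ≠ f := by rintro rfl; exact hzf hze
  have hfe : #f < #e := by
    by_contra! hle
    exact hwz (hE.eq_of_mem_sdiff he hf hef hle hwe hwf hze hzf)
  have he₀e : e₀ ≠ e := by rintro rfl; exact hwz (above f hf hzf w hwe hwf)
  obtain ⟨t, ht₀, hte⟩ := hE.exists_mem_sdiff he₀ he he₀e (hmin e he)
  have htz : t ≠ z := by rintro rfl; exact hte hze
  have htf : t ∈ f := by_contra fun h => htz (above f hf hzf t ht₀ h)
  have hte₁ : t ∈ e₁ := by_contra fun h => htz (below e₀ he₀ hz₀ t ht₀ h)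
  have hfe₁ : f ≠ e₁ := by rintro rfl; exact hfe.not_ge (hmax e he)
  obtain ⟨u, huf, hue₁⟩ := hE.exists_mem_sdiff hf he₁ hfe₁ (hmax f hf)
  have hue : u ∈ e := by_contra fun h =>
    hue₁ (hE.eq_of_mem_sdiff hf he hef.symm hfe.le huf h htf hte ▸ hte₁)
  exact hzf (below e he hze u hue hue₁ ▸ huf)

end OneSperner

section Bigraph

variable {V : Type*} [Fintype V] {H : SimpleGraph V} {A B : Finset V}

theorem IsBipartition.mem_left_of_adj (hbp : IsBipartition H A B) {a b : V} (hb : b ∈ B)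
    (hba : H.Adj b a) : a ∈ A := by
  have ha : a ∈ A ∪ B := by rw [hbp.2.1]; exact mem_univ a
  exact (mem_union.mp ha).resolve_right fun haB => hbp.2.2.2 b hb a haB hba

theorem IsBipartition.twoP3_isIndContained (hbp : IsBipartition H A B)
    {b b' a₁ a₂ a₃ a₄ : V} (hb : b ∈ B) (hb' : b' ∈ B) (h₁ : H.Adj b a₁) (h₂ : H.Adj b a₂)
    (h₃ : H.Adj b' a₃) (h₄ : H.Adj b' a₄) (n₁ : ¬H.Adj b' a₁) (n₂ : ¬H.Adj b' a₂) (n₃ : ¬H.Adj b a₃)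
    (n₄ : ¬H.Adj b a₄) (h₁₂ : a₁ ≠ a₂) (h₃₄ : a₃ ≠ a₄) : twoP3 ⊴ H := by
  have hA := hbp.2.2.1
  have hB := hbp.2.2.2
  have a₁A := hbp.mem_left_of_adj hb h₁
  have a₂A := hbp.mem_left_of_adj hb h₂
  have a₃A := hbp.mem_left_of_adj hb' h₃
  have a₄A := hbp.mem_left_of_adj hb' h₄
  have hadj : ∀ i j, H.Adj (![a₁, b, a₂, a₃, b', a₄] i) (![a₁, b, a₂, a₃, b', a₄] j) ↔
      twoP3.Adj i j := by
    intro i j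
    fin_cases i <;> fin_cases j <;> simp [twoP3] <;> grind [SimpleGraph.adj_comm]
  refine ⟨⟨⟨![a₁, b, a₂, a₃, b', a₄], fun i j hij => ?_⟩, hadj _ _⟩⟩
  fin_cases i <;> fin_cases j <;> simp at hij ⊢ <;> grind [SimpleGraph.Adj.ne]

theorem IsBipartition.oneSperner_neighborFinset (hbp : IsBipartition H A B)
    (hrs : RightSperner H A B) (hfree : ¬twoP3 ⊴ H) :
    OneSperner ((B.image (H.neighborFinset ·) : Finset (Finset V)) : Set (Finset V)) := by
  have hsdiff : ∀ u ∈ B, ∀ v ∈ B, H.neighborFinset u ≠ H.neighborFinset v →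
      0 < #(H.neighborFinset u \ H.neighborFinset v) := fun u hu v hv huv =>
    card_pos.mpr <| sdiff_nonempty.mpr fun hsub => huv <| by
      rw [hrs u hu v hv <| by
        simpa only [← SimpleGraph.coe_neighborFinset] using coe_subset.mpr hsub]
  simp only [OneSperner, coe_image, Set.forall_mem_image, mem_coe]
  intro b hb b' hb' hne
  have h₁ := hsdiff b hb b' hb' hne
  have h₂ := hsdiff b' hb' b hb (Ne.symm hne)
  by_contra hmin
  obtain ⟨a₁, ha₁, a₂, ha₂, h₁₂⟩ :=
    one_lt_card.mp (show 1 < #(H.neighborFinset b \ H.neighborFinset b') by omega)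
  obtain ⟨a₃, ha₃, a₄, ha₄, h₃₄⟩ :=
    one_lt_card.mp (show 1 < #(H.neighborFinset b' \ H.neighborFinset b) by omega)
  simp only [mem_sdiff, SimpleGraph.mem_neighborFinset] at ha₁ ha₂ ha₃ ha₄
  exact hfree (hbp.twoP3_isIndContained hb hb' ha₁.1 ha₂.1 ha₃.1 ha₄.1 ha₁.2 ha₂.2 ha₃.2 ha₄.2
    h₁₂ h₃₄)

theorem IsBipartition.exists_splitting_vertex (hbp : IsBipartition H A B)
    (hrs : RightSperner H A B) (hfree : ¬twoP3 ⊴ H) (hcard : 1 < Fintype.card V) :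
    ∃ z ∈ A, ∀ b ∈ B, ∀ b' ∈ B, H.Adj b z → ¬H.Adj b' z →
      ∀ a, a ≠ z → H.Adj b a → H.Adj b' a := by
  rcases lt_or_ge 1 #(B.image (H.neighborFinset ·)) with h | h
  · obtain ⟨z, ⟨e, he, hze⟩, hz⟩ :=
      (hbp.oneSperner_neighborFinset hrs hfree).exists_splitting_vertex h
    obtain ⟨b₀, hb₀, rfl⟩ := mem_image.mp he
    refine ⟨z, hbp.mem_left_of_adj hb₀ ((SimpleGraph.mem_neighborFinset ..).mp hze),
      fun b hb b' hb' hbz hb'z a haz hba => ?_⟩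
    simpa using hz _ (mem_image_of_mem _ hb) _ (mem_image_of_mem _ hb') (by simpa) (by simpa)
      (mem_erase.mpr ⟨haz, by simpa⟩)
  · have hN : ∀ b ∈ B, ∀ b' ∈ B, H.neighborFinset b = H.neighborFinset b' :=
      fun b hb b' hb' => card_le_one.mp h _ (mem_image_of_mem _ hb) _ (mem_image_of_mem _ hb')
    have hB : #B ≤ 1 := card_le_one.mpr fun b hb b' hb' =>
      hrs b hb b' hb' <| by
        rw [← SimpleGraph.coe_neighborFinset, hN b hb b' hb', SimpleGraph.coe_neighborFinset]
    obtain ⟨z, hz⟩ : A.Nonempty := card_pos.mp <| by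
      have := card_union_le A B
      rw [hbp.2.1, card_univ] at this
      omega
    refine ⟨z, hz, fun b hb b' hb' hbz hb'z => absurd ?_ hb'z⟩
    rw [← SimpleGraph.mem_neighborFinset, ← hN b hb b' hb', SimpleGraph.mem_neighborFinset]
    exact hbz

end Bigraph

section Cobipartite

variable {V : Type*} [Fintype V] {G : SimpleGraph V} {A B : Finset V}

theorem IsBipartition.compl_adj_iff (hbp : IsBipartition Gᶜ A B) {a b : V} (ha : a ∈ A)
    (hb : b ∈ B) : Gᶜ.Adj b a ↔ ¬G.Adj a b := by
  have hab : a ≠ b := fun h => disjoint_left.mp hbp.1 ha (h ▸ hb)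
  simp [SimpleGraph.compl_adj, hab.symm, G.adj_comm]

theorem IsBipartition.isClique_left (hbp : IsBipartition Gᶜ A B) : G.IsClique (A : Set V) :=
  G.isIndepSet_compl.mp fun u hu v hv _ => hbp.2.2.1 u hu v hv

theorem IsBipartition.isClique_right (hbp : IsBipartition Gᶜ A B) : G.IsClique (B : Set V) :=
  G.isIndepSet_compl.mp fun u hu v hv _ => hbp.2.2.2 u hu v hv

theorem IsBipartition.exists_splitting_vertex_compl (hbp : IsBipartition Gᶜ A B)
    (hrs : RightSperner Gᶜ A B) (hfree : ¬twoP3ᶜ ⊴ G) (hcard : 1 < Fintype.card V) :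
    ∃ z ∈ A, ∀ b ∈ B, ∀ b' ∈ B, ¬G.Adj z b → G.Adj z b' →
      ∀ a ∈ A, a ≠ z → ¬G.Adj a b → ¬G.Adj a b' := by
  obtain ⟨z, hzA, hz⟩ :=
    hbp.exists_splitting_vertex hrs (fun h => hfree (by simpa using h.compl)) hcard
  refine ⟨z, hzA, fun b hb b' hb' hzb hzb' a haA haz hab => ?_⟩
  rw [← hbp.compl_adj_iff haA hb] at hab
  rw [← hbp.compl_adj_iff haA hb']
  rw [← hbp.compl_adj_iff hzA hb] at hzb
  exact hz b hb b' hb' hzb (fun h => (hbp.compl_adj_iff hzA hb').mp h hzb') a haz hab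

theorem not_isIndContained_induce {W X : Type*} {K : SimpleGraph W} {G : SimpleGraph X}
    (h : ¬K ⊴ G) (S : Set X) : ¬K ⊴ G.induce S :=
  fun hS => h (hS.trans ⟨SimpleGraph.Embedding.induce S⟩)

/-- Right-Sperner passes to the labeled bigraph induced on `A' ∪ B'`, provided the vertices
of `B'` cannot be told apart by their non-neighbours in `A \ A'`. -/
theorem RightSperner.restrict [DecidableEq V] (hrs : RightSperner Gᶜ A B)
    (hbp : IsBipartition Gᶜ A B) {A' B' : Finset V} (hB' : B' ⊆ B)
    (hout : ∀ u ∈ B', ∀ v ∈ B', ∀ w ∈ A, w ∉ A' → ¬G.Adj w u → ¬G.Adj w v) :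
    ∀ u ∈ B', ∀ v ∈ B',
      (∀ w ∈ A' ∪ B', w ≠ u → ¬G.Adj u w → w ≠ v ∧ ¬G.Adj v w) → u = v := by
  intro u hu v hv hin
  refine hrs u (hB' hu) v (hB' hv) fun w (huw : Gᶜ.Adj u w) => ?_
  by_cases hw : w ∈ A'
  · obtain ⟨hwu, hnuw⟩ := (SimpleGraph.compl_adj ..).mp huw
    obtain ⟨hwv, hnvw⟩ := hin w (mem_union_left _ hw) hwu.symm hnuw
    exact (SimpleGraph.compl_adj ..).mpr ⟨hwv.symm, hnvw⟩
  · have hwA := hbp.mem_left_of_adj (hB' hu) huw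
    exact (hbp.compl_adj_iff hwA (hB' hv)).mpr
      (hout u hu v hv w hwA hw ((hbp.compl_adj_iff hwA (hB' hu)).mp huw))

end Cobipartite

theorem stmt12 {V : Type*} [Fintype V] [DecidableEq V] (G : SimpleGraph V)
    (hcard : 1 < Fintype.card V)
    (hfree : ¬ Nonempty (twoP3ᶜ ↪g G))
    (A B : Finset V) (hbp : IsBipartition Gᶜ A B) (hrs : RightSperner Gᶜ A B) :
    ∃ (z : V) (A1 A2 B1 B2 : Finset V),
      z ∈ A ∧ z ∉ A1 ∧ z ∉ A2 ∧
      insert z (A1 ∪ A2) = A ∧ Disjoint A1 A2 ∧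
      B1 ∪ B2 = B ∧ Disjoint B1 B2 ∧
      G.IsClique (A : Set V) ∧ G.IsClique (B : Set V) ∧
      (∀ v ∈ B1, G.Adj z v) ∧ (∀ v ∈ B2, ¬ G.Adj z v) ∧
      (∀ u ∈ A1, ∀ v ∈ B2, G.Adj u v) ∧
      (∀ u ∈ A2, ∀ v ∈ B1, ¬ G.Adj u v) ∧
      (¬ Nonempty (twoP3ᶜ ↪g G.induce ((A1 ∪ B1 : Finset V) : Set V))) ∧
      (¬ Nonempty (twoP3ᶜ ↪g G.induce ((A2 ∪ B2 : Finset V) : Set V))) ∧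
      (∀ u ∈ B1, ∀ v ∈ B1,
        (∀ w ∈ A1 ∪ B1, w ≠ u → ¬ G.Adj u w → w ≠ v ∧ ¬ G.Adj v w) → u = v) ∧
      (∀ u ∈ B2, ∀ v ∈ B2,
        (∀ w ∈ A2 ∪ B2, w ≠ u → ¬ G.Adj u w → w ≠ v ∧ ¬ G.Adj v w) → u = v) := by
  obtain ⟨z, hzA, hz⟩ := hbp.exists_splitting_vertex_compl hrs hfree hcard
  set B₁ := B.filter (G.Adj z ·)
  set B₂ := B.filter (¬G.Adj z ·)
  set A₁ := (A.erase z).filter (fun a => ∀ b ∈ B₂, G.Adj a b)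
  set A₂ := (A.erase z).filter (fun a => ¬∀ b ∈ B₂, G.Adj a b)
  have hA₂B₁ : ∀ a ∈ A₂, ∀ b ∈ B₁, ¬G.Adj a b := by
    intro a ha b hb
    simp only [A₂, B₁, B₂, mem_filter, mem_erase, not_forall] at ha hb
    obtain ⟨⟨haz, haA⟩, b', ⟨hb'B, hzb'⟩, hab'⟩ := ha
    exact hz b' hb'B b hb.1 hzb' hb.2 a haA haz hab'
  have hA : ∀ w ∈ A, w ≠ z → w ∈ A₁ ∨ w ∈ A₂ := fun w hw hwz => by
    simp only [A₁, A₂, mem_filter, mem_erase]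
    tauto
  refine ⟨z, A₁, A₂, B₁, B₂, hzA, by simp [A₁], by simp [A₂],
    by rw [filter_union_filter_not_eq, insert_erase hzA], disjoint_filter_filter_not _ _ _,
    filter_union_filter_not_eq _ _, disjoint_filter_filter_not _ _ _,
    hbp.isClique_left, hbp.isClique_right, fun v hv => (mem_filter.mp hv).2,
    fun v hv => (mem_filter.mp hv).2, fun u hu v hv => (mem_filter.mp hu).2 v hv, hA₂B₁,
    not_isIndContained_induce hfree _, not_isIndContained_induce hfree _,
    hrs.restrict hbp (filter_subset _ _) ?_, hrs.restrict hbp (filter_subset _ _) ?_⟩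
  · intro u hu v hv w hw hw₁ hwu
    obtain rfl | hwz := eq_or_ne w z
    · exact absurd (mem_filter.mp hu).2 hwu
    · exact hA₂B₁ w ((hA w hw hwz).resolve_left hw₁) v hv
  · intro u hu v hv w hw hw₂ hwu
    obtain rfl | hwz := eq_or_ne w z
    · exact (mem_filter.mp hv).2
    · exact absurd ((mem_filter.mp ((hA w hw hwz).resolve_right hw₂)).2 u hu) hwu
end

section
/- Let (G, A, B) be a labeled bigraph (finite and simple) that is right-Sperner and such that G is 2P₃-free. Then the hypergraph with vertex set A whose hyperedges are exactly the sets N(v) for v ∈ B is 1-Sperner. -/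
open Finset

open scoped Classical

/-!
If two right vertices `u ≠ v` each had two private neighbours, `a, b ∈ N(u) \ N(v)` and
`c, d ∈ N(v) \ N(u)`, then `a - u - b` and `c - v - d` would be an induced `2P₃`, because both
sides of the bipartition are independent. So one of the two differences has at most one
element, and right-Sperner makes both of them nonempty.
-/

instance : DecidableRel twoP3.Adj := fun i j =>
  decidable_of_iff _ (SimpleGraph.fromRel_adj _ i j).symm

lemma twoP3_twins {i j : Fin 6} (h : ∀ k, twoP3.Adj i k ↔ twoP3.Adj j k) :
    i = j ∨ (i = 0 ∧ j = 2) ∨ (i = 2 ∧ j = 0) ∨ (i = 3 ∧ j = 5) ∨ (i = 5 ∧ j = 3) := by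
  revert i j; decide

namespace SimpleGraph

variable {V : Type*} {G : SimpleGraph V}

def twoP3EmbeddingOfAdjIff (f : Fin 6 → V) (hadj : ∀ i j, G.Adj (f i) (f j) ↔ twoP3.Adj i j)
    (h02 : f 0 ≠ f 2) (h35 : f 3 ≠ f 5) : twoP3 ↪g G where
  toFun := f
  inj' i j hij := by
    have htwins : ∀ k, twoP3.Adj i k ↔ twoP3.Adj j k := fun k => by rw [← hadj, ← hadj, hij]
    rcases twoP3_twins htwins with h | ⟨rfl, rfl⟩ | ⟨rfl, rfl⟩ | ⟨rfl, rfl⟩ | ⟨rfl, rfl⟩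
    exacts [h, (h02 hij).elim, (h02 hij.symm).elim, (h35 hij).elim, (h35 hij.symm).elim]
  map_rel_iff' := hadj _ _

lemma nonempty_twoP3_embedding {a b c d u v : V} (hab : a ≠ b) (hcd : c ≠ d)
    (hua : G.Adj u a) (hub : G.Adj u b) (hvc : G.Adj v c) (hvd : G.Adj v d)
    (hva : ¬ G.Adj v a) (hvb : ¬ G.Adj v b) (huc : ¬ G.Adj u c) (hud : ¬ G.Adj u d)
    (huv : ¬ G.Adj u v) (hind : ∀ x ∈ [a, b, c, d], ∀ y ∈ [a, b, c, d], ¬ G.Adj x y) :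
    Nonempty (twoP3 ↪g G) := by
  simp only [List.mem_cons, List.not_mem_nil, or_false, forall_eq_or_imp, forall_eq] at hind
  refine ⟨twoP3EmbeddingOfAdjIff ![a, u, b, c, v, d] (fun i j => ?_) hab hcd⟩
  fin_cases i <;> fin_cases j <;>
    simp [twoP3, hua, hub, hvc, hvd, hua.symm, hub.symm, hvc.symm, hvd.symm, hva, hvb, huc, hud,
      huv, mt G.adj_symm hva, mt G.adj_symm hvb, mt G.adj_symm huc, mt G.adj_symm hud,
      mt G.adj_symm huv, hind]

end SimpleGraph

section Bipartite

variable {V : Type*} [Fintype V] {G : SimpleGraph V} {A B : Finset V} {u v : V}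

lemma IsBipartition.mem_left_of_adj_s14 (hbp : IsBipartition G A B) (hu : u ∈ B) {x : V}
    (hux : G.Adj u x) : x ∈ A := by
  obtain ⟨-, hcover, -, hB⟩ := hbp
  have hx : x ∈ A ∪ B := hcover ▸ mem_univ x
  exact (mem_union.mp hx).resolve_right fun hxB => hB u hu x hxB hux

variable [DecidableEq V] [DecidableRel G.Adj]

lemma RightSperner.nonempty_neighborFinset_sdiff (hrs : RightSperner G A B) (hu : u ∈ B)
    (hv : v ∈ B) (huv : u ≠ v) : (G.neighborFinset u \ G.neighborFinset v).Nonempty := by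
  rw [sdiff_nonempty]
  intro hsub
  refine huv (hrs u hu v hv fun x hx => ?_)
  simpa using hsub (by simpa using hx)

lemma IsBipartition.nonempty_twoP3_embedding (hbp : IsBipartition G A B)
    (hu : u ∈ B) (hv : v ∈ B) (huv : 2 ≤ #(G.neighborFinset u \ G.neighborFinset v))
    (hvu : 2 ≤ #(G.neighborFinset v \ G.neighborFinset u)) : Nonempty (twoP3 ↪g G) := by
  obtain ⟨a, ha, b, hb, hab⟩ := one_lt_card.mp huv
  obtain ⟨c, hc, d, hd, hcd⟩ := one_lt_card.mp hvu
  simp only [mem_sdiff, SimpleGraph.mem_neighborFinset] at ha hb hc hd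
  have hA : ∀ x ∈ [a, b, c, d], x ∈ A := by
    simp only [List.mem_cons, List.not_mem_nil, or_false, forall_eq_or_imp, forall_eq]
    exact ⟨hbp.mem_left_of_adj_s14 hu ha.1, hbp.mem_left_of_adj_s14 hu hb.1,
      hbp.mem_left_of_adj_s14 hv hc.1, hbp.mem_left_of_adj_s14 hv hd.1⟩
  exact SimpleGraph.nonempty_twoP3_embedding hab hcd ha.1 hb.1 hc.1 hd.1 ha.2 hb.2 hc.2 hd.2
    (hbp.2.2.2 u hu v hv) fun x hx y hy => hbp.2.2.1 x (hA x hx) y (hA y hy)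

end Bipartite

theorem stmt14 {V : Type*} [Fintype V] [DecidableEq V] (G : SimpleGraph V)
    [DecidableRel G.Adj] (A B : Finset V)
    (hbp : IsBipartition G A B) (hrs : RightSperner G A B)
    (hfree : ¬ Nonempty (twoP3 ↪g G)) :
    OneSperner {e : Finset V | ∃ v ∈ B, e = G.neighborFinset v} := by
  rintro _ ⟨u, hu, rfl⟩ _ ⟨v, hv, rfl⟩ hne
  have huv : u ≠ v := by rintro rfl; exact hne rfl
  have h₁ := (hrs.nonempty_neighborFinset_sdiff hu hv huv).card_pos
  have h₂ := (hrs.nonempty_neighborFinset_sdiff hv hu huv.symm).card_pos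
  by_contra hmin
  exact hfree (hbp.nonempty_twoP3_embedding hu hv (by omega) (by omega))
end

section
/- Let G be a finite simple connected split graph with at least two vertices, let (K, I) be a split partition of G, and let u, v ∈ K be distinct vertices such that N(u) ∩ I ⊆ N(v) ∩ I. Then γ(G − u) = γ(G), where G − u denotes the subgraph of G induced by V(G) ∖ {u}. -/
open Finset

open scoped Classical

/-!
The hypothesis gives `N[u] ⊆ N[v]`, so replacing `u` by `v` in a dominating set of `G` gives a
dominating set avoiding `u`: `γ(G - u) ≤ γ(G)`. Conversely, a dominating set `E` of `G - u` misses
only `u`. Some `w ∈ E` dominates `v`: if `w ∈ K`, then `w` is adjacent to `u` as well; if `w ∈ I`,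
then `N[w] ⊆ N[v]` because `N(w) ⊆ K`, so swapping `w` for `v` still dominates `G - u` and now
also dominates `u`.
-/

def Dominates {V : Type*} (G : SimpleGraph V) (D : Finset V) (x : V) : Prop :=
  x ∈ D ∨ ∃ y ∈ D, G.Adj y x

theorem card_insert_erase_le {V : Type*} {D : Finset V} {w : V} (hw : w ∈ D) (v : V) :
    (insert v (D.erase w)).card ≤ D.card :=
  (card_insert_le v _).trans (card_erase_add_one hw).le

section Domination

variable {V : Type*} [Fintype V] {G : SimpleGraph V}

theorem mem_closedNbhd {v x : V} : x ∈ closedNbhd G v ↔ x = v ∨ G.Adj v x := by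
  simp [closedNbhd]

theorem dominates_iff_exists_mem_closedNbhd {D : Finset V} {x : V} :
    Dominates G D x ↔ ∃ y ∈ D, x ∈ closedNbhd G y := by
  simp only [Dominates, mem_closedNbhd]
  constructor
  · rintro (hx | ⟨y, hy, hyx⟩)
    · exact ⟨x, hx, Or.inl rfl⟩
    · exact ⟨y, hy, Or.inr hyx⟩
  · rintro ⟨y, hy, rfl | hyx⟩
    · exact Or.inl hy
    · exact Or.inr ⟨y, hy, hyx⟩

theorem Dominates.insert_erase_of_closedNbhd_subset {D : Finset V} {x w v : V}
    (hx : Dominates G D x) (hwv : closedNbhd G w ⊆ closedNbhd G v) :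
    Dominates G (insert v (D.erase w)) x := by
  rw [dominates_iff_exists_mem_closedNbhd] at hx ⊢
  obtain ⟨y, hyD, hxy⟩ := hx
  by_cases hyw : y = w
  · exact ⟨v, mem_insert_self v _, hwv (hyw ▸ hxy)⟩
  · exact ⟨y, mem_insert_of_mem (mem_erase.mpr ⟨hyw, hyD⟩), hxy⟩

end Domination

section DominationNumber

variable {W : Type*} [Fintype W]

theorem gamma_le_card {G : SimpleGraph W} {D : Finset W} (hD : IsDomSet G D) :
    gamma G ≤ D.card :=
  Nat.sInf_le ⟨D, hD, rfl⟩

theorem exists_isDomSet_card_eq_gamma (G : SimpleGraph W) :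
    ∃ D : Finset W, IsDomSet G D ∧ D.card = gamma G :=
  Nat.sInf_mem (s := {n | ∃ D : Finset W, IsDomSet G D ∧ D.card = n})
    ⟨_, univ, fun x => Or.inl (mem_univ x), rfl⟩

end DominationNumber

section VertexDeletion

variable {V : Type*} [Fintype V] {G : SimpleGraph V} {u : V}

theorem gamma_induce_compl_singleton_le_card {D : Finset V} (hu : u ∉ D)
    (hD : ∀ x, x ≠ u → Dominates G D x) :
    gamma (G.induce ({u}ᶜ : Set V)) ≤ D.card := by
  have hDu : ∀ x ∈ D, x ∈ ({u}ᶜ : Set V) := fun x hx (h : x = u) => hu (h ▸ hx)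
  calc gamma (G.induce ({u}ᶜ : Set V)) ≤ (D.subtype (· ∈ ({u}ᶜ : Set V))).card := by
        refine gamma_le_card fun ⟨x, hx⟩ => ?_
        rcases hD x hx with hxD | ⟨y, hyD, hyx⟩
        · exact Or.inl (mem_subtype.mpr hxD)
        · exact Or.inr ⟨⟨y, hDu y hyD⟩, mem_subtype.mpr hyD, hyx⟩
    _ = D.card := by rw [card_subtype, filter_true_of_mem hDu]

theorem exists_dominates_ne_card_eq_gamma_induce_compl_singleton (G : SimpleGraph V) (u : V) :
    ∃ E : Finset V, u ∉ E ∧ (∀ x, x ≠ u → Dominates G E x) ∧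
      E.card = gamma (G.induce ({u}ᶜ : Set V)) := by
  obtain ⟨D, hD, hcard⟩ := exists_isDomSet_card_eq_gamma (G.induce ({u}ᶜ : Set V))
  refine ⟨D.map (Function.Embedding.subtype _), fun hu => ?_, fun x hx => ?_, ?_⟩
  · obtain ⟨y, -, hy⟩ := mem_map.mp hu
    exact y.2 hy
  · rcases hD ⟨x, hx⟩ with hxD | ⟨y, hyD, hyx⟩
    · exact Or.inl (mem_map_of_mem _ hxD)
    · exact Or.inr ⟨y, mem_map_of_mem _ hyD, hyx⟩
  · rw [card_map, hcard]

theorem gamma_induce_compl_singleton_le_of_closedNbhd_subset {v : V} (huv : u ≠ v)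
    (h : closedNbhd G u ⊆ closedNbhd G v) :
    gamma (G.induce ({u}ᶜ : Set V)) ≤ gamma G := by
  obtain ⟨D, hD, hcard⟩ := exists_isDomSet_card_eq_gamma G
  rw [← hcard]
  by_cases huD : u ∈ D
  · calc gamma (G.induce ({u}ᶜ : Set V)) ≤ (insert v (D.erase u)).card := by
          refine gamma_induce_compl_singleton_le_card (fun hu => ?_)
            fun x _ => Dominates.insert_erase_of_closedNbhd_subset (hD x) h
          rcases mem_insert.mp hu with hu | hu
          · exact huv hu
          · exact notMem_erase u D hu
      _ ≤ D.card := card_insert_erase_le huD v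
  · exact gamma_induce_compl_singleton_le_card huD fun x _ => hD x

end VertexDeletion

namespace IsSplitPartition

variable {V : Type*} [Fintype V] {G : SimpleGraph V} {K I : Finset V}

theorem mem_or_mem (hsp : IsSplitPartition G K I) (x : V) : x ∈ K ∨ x ∈ I :=
  mem_union.mp (hsp.2.1 ▸ mem_univ x)

theorem adj_of_mem_left (hsp : IsSplitPartition G K I) {x y : V} (hx : x ∈ K) (hy : y ∈ K)
    (hxy : x ≠ y) : G.Adj x y :=
  hsp.2.2.1 (mem_coe.mpr hx) (mem_coe.mpr hy) hxy

theorem closedNbhd_subset {w v : V} (hsp : IsSplitPartition G K I) (hv : v ∈ K)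
    (hw : w ∈ closedNbhd G v)
    (hN : G.neighborSet w ∩ (I : Set V) ⊆ G.neighborSet v ∩ (I : Set V)) :
    closedNbhd G w ⊆ closedNbhd G v := by
  intro x hx
  rcases mem_closedNbhd.mp hx with rfl | hwx
  · exact hw
  rw [mem_closedNbhd]
  rcases hsp.mem_or_mem x with hxK | hxI
  · by_cases hxv : x = v
    · exact Or.inl hxv
    · exact Or.inr (hsp.adj_of_mem_left hv hxK (Ne.symm hxv))
  · exact Or.inr (hN ⟨hwx, mem_coe.mpr hxI⟩).1

theorem closedNbhd_subset_of_mem_right {w v : V} (hsp : IsSplitPartition G K I) (hv : v ∈ K)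
    (hw : w ∈ I) (hwv : G.Adj w v) : closedNbhd G w ⊆ closedNbhd G v :=
  hsp.closedNbhd_subset hv (mem_closedNbhd.mpr (Or.inr hwv.symm))
    fun x ⟨hwx, hxI⟩ => absurd hwx (hsp.2.2.2 w hw x (mem_coe.mp hxI))

theorem gamma_le_gamma_induce_compl_singleton (hsp : IsSplitPartition G K I) {u v : V}
    (hu : u ∈ K) (hv : v ∈ K) (huv : u ≠ v) :
    gamma G ≤ gamma (G.induce ({u}ᶜ : Set V)) := by
  obtain ⟨E, huE, hE, hcard⟩ := exists_dominates_ne_card_eq_gamma_induce_compl_singleton G u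
  rw [← hcard]
  obtain ⟨w, hwE, hvNw⟩ := dominates_iff_exists_mem_closedNbhd.mp (hE v huv.symm)
  rcases hsp.mem_or_mem w with hwK | hwI
  · refine gamma_le_card fun x => ?_
    by_cases hxu : x = u
    · exact Or.inr ⟨w, hwE, hxu ▸ hsp.adj_of_mem_left hwK hu fun h => huE (h ▸ hwE)⟩
    · exact hE x hxu
  · have hwv : G.Adj w v := by
      rcases mem_closedNbhd.mp hvNw with rfl | h
      · exact absurd hwI (disjoint_left.mp hsp.1 hv)
      · exact h
    have hNwv := hsp.closedNbhd_subset_of_mem_right hv hwI hwv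
    calc gamma G ≤ (insert v (E.erase w)).card := by
          refine gamma_le_card fun x => ?_
          by_cases hxu : x = u
          · exact Or.inr ⟨v, mem_insert_self v _, hxu ▸ hsp.adj_of_mem_left hv hu huv.symm⟩
          · exact (hE x hxu).insert_erase_of_closedNbhd_subset hNwv
      _ ≤ E.card := card_insert_erase_le hwE v

end IsSplitPartition

theorem stmt17_general {V : Type*} [Fintype V] (G : SimpleGraph V)
    (K I : Finset V) (hsp : IsSplitPartition G K I)
    (u v : V) (hu : u ∈ K) (hv : v ∈ K) (huv : u ≠ v)
    (hN : G.neighborSet u ∩ (I : Set V) ⊆ G.neighborSet v ∩ (I : Set V)) :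
    gamma (G.induce ({u}ᶜ : Set V)) = gamma G := by
  have hNuv : closedNbhd G u ⊆ closedNbhd G v :=
    hsp.closedNbhd_subset hv (mem_closedNbhd.mpr (Or.inr (hsp.adj_of_mem_left hv hu huv.symm))) hN
  exact le_antisymm (gamma_induce_compl_singleton_le_of_closedNbhd_subset huv hNuv)
    (hsp.gamma_le_gamma_induce_compl_singleton hu hv huv)

theorem stmt17 {V : Type*} [Fintype V] [DecidableEq V] (G : SimpleGraph V)
    (hconn : G.Connected) (hcard : 1 < Fintype.card V)
    (K I : Finset V) (hsp : IsSplitPartition G K I)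
    (u v : V) (hu : u ∈ K) (hv : v ∈ K) (huv : u ≠ v)
    (hN : G.neighborSet u ∩ (I : Set V) ⊆ G.neighborSet v ∩ (I : Set V)) :
    gamma (G.induce ({u}ᶜ : Set V)) = gamma G :=
  stmt17_general G K I hsp u v hu hv huv hN
end
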